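/- arXiv:1406.6745 — 4 statements merged into one kernel-verified Lean document; each statement's English description precedes it below -/
import Mathlib

section
/- For each prime p, the quantity ρ(p) = (p⁵ − 1)/(p⁶ − 1) equals the sum over residue pairs (a,b) mod p with p ∣ b of the local density δ(p;(a,b)), i.e. the density of pairs (A,B) ∈ 𝓔(X) with p ∣ B is ρ(p); the same holds for the condition p ∣ A² − 4B. -/
/-- The local density `δ(p;(a,b))` of the residue class `(a,b)` mod `p`. -/
noncomputable def localDensityZMod (p : ℕ) (x : ZMod p × ZMod p) : ℝ :=
  if x.1 ≠ 0 ∨ x.2 ≠ 0 then (p : ℝ) ^ 4 / ((p : ℝ) ^ 6 - 1)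
  else ((p : ℝ) ^ 4 - 1) / ((p : ℝ) ^ 6 - 1)

lemma localDensity_eq (p : ℕ) (x : ZMod p × ZMod p) :
    localDensityZMod p x = (if x = 0 then ((p : ℝ) ^ 4 - 1) / ((p : ℝ) ^ 6 - 1)
      - (p : ℝ) ^ 4 / ((p : ℝ) ^ 6 - 1) else 0) + (p : ℝ) ^ 4 / ((p : ℝ) ^ 6 - 1) := by
  unfold localDensityZMod
  rcases eq_or_ne x 0 with h | h
  · subst h; simp
  · have hx : x.1 ≠ 0 ∨ x.2 ≠ 0 := by
      exact or_iff_not_imp_left.2 fun h1 => by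
        simp only [not_not] at h1
        intro h2
        exact h (Prod.ext h1 h2)
    rw [if_pos hx, if_neg h]; ring

lemma sum_delta (p : ℕ) [Fact p.Prime] (f : ZMod p → ZMod p × ZMod p)
    (hf : Function.Injective f) (h0 : f 0 = 0) :
    (∑ a : ZMod p, localDensityZMod p (f a)) = ((p : ℝ) ^ 5 - 1) / ((p : ℝ) ^ 6 - 1) := by
  have hp : (1 : ℝ) < (p : ℝ) := by
    exact_mod_cast (Fact.out : p.Prime).one_lt
  have hne : (p : ℝ) ^ 6 - 1 ≠ 0 := by
    have : (1 : ℝ) < (p : ℝ) ^ 6 := one_lt_pow₀ hp (by norm_num)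
    linarith
  simp only [localDensity_eq, Finset.sum_add_distrib, Finset.sum_const, nsmul_eq_mul]
  have : ∀ a : ZMod p, f a = 0 ↔ a = 0 := fun a =>
    ⟨fun h => hf (h.trans h0.symm), fun h => h ▸ h0⟩
  simp only [this]
  rw [Finset.sum_ite_eq' Finset.univ (0 : ZMod p)]
  simp only [Finset.mem_univ, if_pos, Finset.card_univ, ZMod.card]
  field_simp
  ring

/-- `ρ(p) = (p⁵-1)/(p⁶-1)` is the density of pairs `(A,B) ∈ 𝓔(X)` with `p ∣ B`, i.e. the sum
of `δ(p;(a,b))` over residue pairs with `p ∣ b`; for odd `p` the same holds for the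
condition `p ∣ A² - 4B`. -/
theorem localDensity_sum (p : ℕ) [Fact p.Prime] :
    (∑ x : ZMod p × ZMod p, if x.2 = 0 then localDensityZMod p x else 0) =
        ((p : ℝ) ^ 5 - 1) / ((p : ℝ) ^ 6 - 1) ∧
    (p ≠ 2 →
      (∑ x : ZMod p × ZMod p, if x.1 ^ 2 - 4 * x.2 = 0 then localDensityZMod p x else 0) =
        ((p : ℝ) ^ 5 - 1) / ((p : ℝ) ^ 6 - 1)) := by
  constructor
  · rw [Fintype.sum_prod_type]
    have : ∀ a : ZMod p, (∑ b : ZMod p, if b = 0 then localDensityZMod p (a, b) else 0)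
        = localDensityZMod p (a, 0) := fun a =>
      Finset.sum_ite_eq' Finset.univ (0 : ZMod p) (fun b => localDensityZMod p (a, b))
        |>.trans (by simp)
    simp only [this]
    exact sum_delta p (fun a => (a, 0)) (fun a b h => (Prod.ext_iff.1 h).1) rfl
  · intro hp2
    have h4 : (4 : ZMod p) ≠ 0 := by
      have : ((4 : ℕ) : ZMod p) ≠ 0 := by
        rw [Ne, ZMod.natCast_eq_zero_iff]
        intro h
        have h2 : p ∣ 2 := (Fact.out : p.Prime).dvd_of_dvd_pow
          (show p ∣ 2 ^ 2 by norm_num; exact h)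
        exact hp2 ((Nat.prime_dvd_prime_iff_eq Fact.out Nat.prime_two).1 h2)
      simpa using this
    have key : ∀ x : ZMod p × ZMod p,
        (x.1 ^ 2 - 4 * x.2 = 0) ↔ (x.2 = 4⁻¹ * x.1 ^ 2) := by
      intro x
      rw [sub_eq_zero, eq_inv_mul_iff_mul_eq₀ h4, eq_comm]
    simp only [key]
    rw [Fintype.sum_prod_type]
    have : ∀ a : ZMod p,
        (∑ b : ZMod p, if b = 4⁻¹ * a ^ 2 then localDensityZMod p (a, b) else 0)
        = localDensityZMod p (a, 4⁻¹ * a ^ 2) := fun a =>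
      Finset.sum_ite_eq' Finset.univ (4⁻¹ * a ^ 2) (fun b => localDensityZMod p (a, b))
        |>.trans (by simp)
    simp only [this]
    exact sum_delta p (fun a => (a, 4⁻¹ * a ^ 2))
      (fun a b h => (Prod.ext_iff.1 h).1) (by simp)
end

section
/- Let p be an odd prime at which E: y² = x³ + Ax² + Bx has multiplicative reduction, and suppose p ∣ A² − 4B. Then the reduction is split multiplicative if and only if −2AB is a nonzero square mod p. -/
/-- `E` has multiplicative reduction at `p`. -/
def HasMultiplicativeReduction (p : ℕ) (A B : ℤ) : Prop :=
  (p : ℤ) ∣ 16 * B ^ 2 * (A ^ 2 - 4 * B) ∧ ¬ (p : ℤ) ∣ 16 * (A ^ 2 - 3 * B)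

/-- The reduction of `y² = x³ + Ax² + Bx` mod `p` is *split* multiplicative: the reduced
cubic has a double root `x₀` and a simple root `x₁` over `𝔽_p`, and the tangent slopes at
the node `(x₀, 0)` lie in `𝔽_p`, i.e. `x₀ - x₁` is a square in `𝔽_p`. -/
def IsSplitMultiplicative (p : ℕ) (A B : ℤ) : Prop :=
  ∃ x₀ x₁ : ZMod p, x₀ ≠ x₁ ∧
    (∀ x : ZMod p, x ^ 3 + (A : ZMod p) * x ^ 2 + (B : ZMod p) * x =
      (x - x₀) ^ 2 * (x - x₁)) ∧ IsSquare (x₀ - x₁)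

/-- If `p` is an odd prime of multiplicative reduction for `E : y² = x³ + Ax² + Bx` with
`p ∣ A² - 4B`, then the reduction is split if and only if `-2AB` is a nonzero square mod
`p`, i.e. the Legendre symbol `(-2AB/p) = 1`. -/
theorem split_iff_of_dvd_discFactor (p : ℕ) [Fact p.Prime] (hodd : p ≠ 2) (A B : ℤ)
    (hmult : HasMultiplicativeReduction p A B) (hdvd : (p : ℤ) ∣ A ^ 2 - 4 * B) :
    IsSplitMultiplicative p A B ↔ legendreSym p (-2 * A * B) = 1 := by
  have hp : p.Prime := Fact.out
  set a : ZMod p := (A : ZMod p) with ha_def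
  set b : ZMod p := (B : ZMod p) with hb_def
  have h2 : (2 : ZMod p) ≠ 0 := by
    have : ((2 : ℕ) : ZMod p) ≠ 0 := by
      rw [Ne, ZMod.natCast_eq_zero_iff]
      intro h
      exact hodd ((Nat.prime_dvd_prime_iff_eq hp Nat.prime_two).mp h)
    exact_mod_cast this
  have hab : a ^ 2 = 4 * b := by
    have h := (ZMod.intCast_zmod_eq_zero_iff_dvd _ p).mpr hdvd
    push_cast at h
    linear_combination h
  have hb : b ≠ 0 := by
    have h := hmult.2
    rw [← ZMod.intCast_zmod_eq_zero_iff_dvd] at h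
    push_cast at h
    intro hb0
    exact h (by linear_combination 16 * hab + 16 * hb0)
  have ha : a ≠ 0 := by
    intro ha0
    apply hb
    have : (4 : ZMod p) * b = 0 := by rw [← hab, ha0]; ring
    have h4 : (4 : ZMod p) ≠ 0 := by
      intro h4
      exact h2 (by
        have : (2 : ZMod p) * 2 = 0 := by linear_combination h4
        rcases mul_eq_zero.mp this with h | h <;> exact h)
    exact (mul_eq_zero.mp this).resolve_left h4
  have hcast : ((-2 * A * B : ℤ) : ZMod p) = -2 * a * b := by push_cast; ring
  constructor
  · rintro ⟨x₀, x₁, hne, hfac, hsq⟩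
    have e0 := hfac 0
    have e1 := hfac 1
    have e2 := hfac (-1)
    have he0 : x₀ ^ 2 * x₁ = 0 := by linear_combination e0
    have ha2 : a = -2 * x₀ - x₁ := by
      have h := mul_left_cancel₀ h2 (show (2 : ZMod p) * a = 2 * (-2 * x₀ - x₁) by
        linear_combination e1 + e2 - 2 * he0)
      exact h
    have hb2 : b = x₀ ^ 2 + 2 * x₀ * x₁ := by
      linear_combination e1 - ha2 - he0
    rcases mul_eq_zero.mp he0 with h | hx1
    · exfalso
      have hx0 : x₀ = 0 := by
        have := sq_eq_zero_iff.mp h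
        exact this
      exact hb (by rw [hb2, hx0]; ring)
    · rw [hx1, sub_zero] at hsq
      obtain ⟨r, hr⟩ := hsq
      rw [legendreSym.eq_one_iff p]
      · rw [hcast]
        refine ⟨2 * r ^ 3, ?_⟩
        rw [ha2, hb2, hx1, hr]
        ring
      · rw [hcast]
        intro h0
        rcases mul_eq_zero.mp h0 with h0 | h0
        · rcases mul_eq_zero.mp h0 with h0 | h0
          · exact h2 (by linear_combination -h0)
          · exact ha h0
        · exact hb h0
  · intro h
    have hne0 : ((-2 * A * B : ℤ) : ZMod p) ≠ 0 := by
      rw [hcast]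
      intro h0
      rcases mul_eq_zero.mp h0 with h0 | h0
      · rcases mul_eq_zero.mp h0 with h0 | h0
        · exact h2 (by linear_combination -h0)
        · exact ha h0
      · exact hb h0
    have hsq := (legendreSym.eq_one_iff p hne0).mp h
    rw [hcast] at hsq
    obtain ⟨x₀, hx₀⟩ : ∃ x₀ : ZMod p, x₀ = -a * (2 : ZMod p)⁻¹ := ⟨_, rfl⟩
    have h2x : (2 : ZMod p) * x₀ = -a := by
      rw [hx₀]
      field_simp
    have hx0ne : x₀ ≠ 0 := by
      intro h0
      apply ha
      have h1 := h2x
      rw [h0, mul_zero] at h1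
      linear_combination h1
    have hbx : b = x₀ ^ 2 := by
      have h4 : (2 : ZMod p) * (2 * b) = 2 * (2 * x₀ ^ 2) := by
        linear_combination -hab + (a - 2 * x₀) * h2x
      exact mul_left_cancel₀ h2 (mul_left_cancel₀ h2 h4)
    refine ⟨x₀, 0, hx0ne, ?_, ?_⟩
    · intro x
      rw [sub_zero]
      linear_combination x ^ 2 * h2x + x * hbx
    · rw [sub_zero]
      obtain ⟨r, hr⟩ := hsq
      have hnz : (2 : ZMod p) * x₀ ≠ 0 := mul_ne_zero h2 hx0ne
      have key : (2 * x₀) ^ 2 * x₀ = r * r := by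
        linear_combination hr + 2 * b * h2x - 4 * x₀ * hbx
      refine ⟨r * (2 * x₀)⁻¹, ?_⟩
      field_simp
      linear_combination key
end

section
/- For the 2-isogeny φ: E → E' with kernel C and dual isogeny φ̂ with kernel C' = φ(E[2]), and any place v of ℚ, there is an exact sequence 0 → C'/φ(E(ℚ_v)[2]) → H¹_φ(ℚ_v, C) → H¹_f(ℚ_v, E[2]) → H¹_{φ̂}(ℚ_v, C') → 0. -/
/-- Local exact sequence of Selmer conditions (Silverman, Remark X.4.7).  Here `EK` and
`E'K` stand for the groups of `ℚ_v`-points `E(ℚ_v)` and `E'(ℚ_v)`; `φ : EK →+ E'K` is the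
2-isogeny and `ψ : E'K →+ EK` its dual, so `ψ ∘ φ = [2]` and `φ ∘ ψ = [2]`; `C' = ker ψ`
is the kernel of the dual isogeny; `H1C`, `H1E2`, `H1C'` stand for `H¹(ℚ_v, C)`,
`H¹(ℚ_v, E[2])`, `H¹(ℚ_v, C')` with the maps `ι`, `π` induced by `C ↪ E[2] ↠ C'`;
`δ`, `δ₂`, `δ'` are the connecting (Kummer) maps, whose images are the local conditions
`H¹_φ(ℚ_v, C)`, `H¹_f(ℚ_v, E[2])`, `H¹_{φ̂}(ℚ_v, C')`.  The conclusion asserts the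
exactness of
`0 → C'/φ(E(ℚ_v)[2]) → H¹_φ(ℚ_v, C) → H¹_f(ℚ_v, E[2]) → H¹_{φ̂}(ℚ_v, C') → 0`. -/
theorem local_selmer_exact_sequence
    (EK E'K H1C H1E2 H1C' : Type)
    [AddCommGroup EK] [AddCommGroup E'K]
    [AddCommGroup H1C] [AddCommGroup H1E2] [AddCommGroup H1C']
    (φ : EK →+ E'K) (ψ : E'K →+ EK)
    (δ : E'K →+ H1C) (δ2 : EK →+ H1E2) (δ' : EK →+ H1C')
    (ι : H1C →+ H1E2) (π : H1E2 →+ H1C')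
    (hdual : ∀ P, ψ (φ P) = P + P) (hdual' : ∀ Q, φ (ψ Q) = Q + Q)
    (hkerδ : ∀ Q, δ Q = 0 ↔ Q ∈ φ.range)
    (hkerδ' : ∀ P, δ' P = 0 ↔ P ∈ ψ.range)
    (hkerδ2 : ∀ P, δ2 P = 0 ↔ ∃ R : EK, R + R = P)
    (hcomm1 : ∀ Q, ι (δ Q) = δ2 (ψ Q))
    (hcomm2 : ∀ P, π (δ2 P) = δ' P)
    (hιπ : ∀ x, π (ι x) = 0) :
    -- injectivity of `C'/φ(E(ℚ_v)[2]) → H¹_φ(ℚ_v, C)`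
    (∀ Q : E'K, ψ Q = 0 → δ Q = 0 → ∃ P : EK, P + P = 0 ∧ φ P = Q) ∧
    -- exactness at `H¹_φ(ℚ_v, C)`
    ({x : H1C | x ∈ δ.range ∧ ι x = 0} = δ '' {Q : E'K | ψ Q = 0}) ∧
    -- `ι` maps `H¹_φ` into `H¹_f`, and exactness at `H¹_f(ℚ_v, E[2])`
    (∀ x : H1C, x ∈ δ.range → ι x ∈ δ2.range) ∧
    ({y : H1E2 | y ∈ δ2.range ∧ π y = 0} = ι '' (δ.range : Set H1C)) ∧
    -- surjectivity onto `H¹_{φ̂}(ℚ_v, C')`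
    (π '' (δ2.range : Set H1E2) = (δ'.range : Set H1C')) := by
  refine ⟨?_, ?_, ?_, ?_, ?_⟩
  · intro Q hψ hδ
    obtain ⟨P, hP⟩ := (hkerδ Q).mp hδ
    exact ⟨P, by rw [← hdual P, hP, hψ], hP⟩
  · ext x
    constructor
    · rintro ⟨⟨Q, hQ⟩, hι⟩
      rw [← hQ, hcomm1] at hι
      obtain ⟨R, hR⟩ := (hkerδ2 _).mp hι
      refine ⟨Q - φ R, ?_, ?_⟩
      · simp [hdual, hR]
      · rw [map_sub, (hkerδ (φ R)).mpr ⟨R, rfl⟩, sub_zero, hQ]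
    · rintro ⟨Q, hQ, rfl⟩
      exact ⟨⟨Q, rfl⟩, by rw [hcomm1, hQ, map_zero]⟩
  · rintro x ⟨Q, rfl⟩
    exact ⟨ψ Q, (hcomm1 Q).symm⟩
  · ext y
    constructor
    · rintro ⟨⟨P, rfl⟩, hπ⟩
      rw [hcomm2] at hπ
      obtain ⟨Q, hQ⟩ := (hkerδ' P).mp hπ
      exact ⟨δ Q, ⟨Q, rfl⟩, by rw [hcomm1, hQ]⟩
    · rintro ⟨x, ⟨Q, rfl⟩, rfl⟩
      exact ⟨⟨ψ Q, (hcomm1 Q).symm⟩, hιπ _⟩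
  · ext z
    constructor
    · rintro ⟨y, ⟨P, rfl⟩, rfl⟩
      exact ⟨P, (hcomm2 P).symm⟩
    · rintro ⟨P, rfl⟩
      exact ⟨δ2 P, ⟨P, rfl⟩, hcomm2 P⟩
end

section
/- For a squarefree positive integer q and residues a, b mod q, the number of lifts (a', b') mod q⁴ of (a, b) such that there is no prime p ∣ q with p² ∣ a' and p⁴ ∣ b' equals ∏_{p ∣ q, p ∤ a or p ∤ b} p⁶ · ∏_{p ∣ q, p ∣ a and p ∣ b} (p⁶ − p²). -/
open Function

/-!
By the Chinese remainder theorem `ZMod (q⁴) ≃ ∏_{p ∣ q} ZMod (p⁴)`, and both the lifting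
conditions and the excluded divisibilities can be read off prime by prime, so the count is a
product of local counts. Locally, `(a, b)` mod `p` has `p³ · p³` lifts mod `p⁴`; the excluded ones
(`p² ∣ a'` and `p⁴ ∣ b'`) exist only when `p ∣ a` and `p ∣ b`, and then there are `p² · 1` of them.
-/

theorem Nat.card_subtype_and_not {α : Type*} [Finite α] (A C : α → Prop) :
    Nat.card {x // A x ∧ ¬C x} = Nat.card {x // A x} - Nat.card {x // A x ∧ C x} := by
  have h := Set.ncard_inter_add_ncard_sdiff_eq_ncard {x | A x} {x | C x}
  rw [← Nat.card_coe_set_eq, ← Nat.card_coe_set_eq, ← Nat.card_coe_set_eq] at h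
  exact (Nat.sub_eq_of_eq_add' h.symm).symm

theorem Nat.card_subtype_prod {α β : Type*} (P : α → Prop) (Q : β → Prop) :
    Nat.card {z : α × β // P z.1 ∧ Q z.2} = Nat.card {x // P x} * Nat.card {y // Q y} := by
  rw [Nat.card_congr Equiv.subtypeProdEquivProd, Nat.card_prod]

theorem Nat.card_subtype_prod_eq_prod_of_equiv_pi {R ι : Type*} [Fintype ι] {α : ι → Type*}
    (e : R ≃ ∀ i, α i) {P : R × R → Prop} (Q : ∀ i, α i × α i → Prop)
    (hPQ : ∀ x, P x ↔ ∀ i, Q i (e x.1 i, e x.2 i)) :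
    Nat.card {x // P x} = ∏ i, Nat.card {y // Q i y} := by
  rw [← Nat.card_pi, ← Nat.card_congr Equiv.subtypePiEquivPi]
  exact Nat.card_congr <| Equiv.subtypeEquiv
    ((e.prodCongr e).trans (Equiv.arrowProdEquivProdArrow _ _ _).symm) hPQ

theorem Nat.pairwise_coprime_primeFactors (q : ℕ) :
    Pairwise (Nat.Coprime on fun p : q.primeFactors => (p : ℕ)) := fun p p' hpp' =>
  (Nat.coprime_primes (Nat.prime_of_mem_primeFactors p.2) (Nat.prime_of_mem_primeFactors p'.2)).mpr
    (Subtype.coe_injective.ne hpp')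

theorem Squarefree.prod_primeFactors_pow {q : ℕ} (hq : Squarefree q) (k : ℕ) :
    ∏ p : q.primeFactors, (p : ℕ) ^ k = q ^ k := by
  rw [Finset.prod_coe_sort q.primeFactors (· ^ k), Finset.prod_pow,
    Nat.prod_primeFactors_of_squarefree hq]

namespace ZMod

variable {m n : ℕ}

theorem castHom_castHom {k : ℕ} (hmk : m ∣ k) (hkn : k ∣ n) (x : ZMod n) :
    castHom hmk (ZMod m) (castHom hkn (ZMod k) x) = castHom (hmk.trans hkn) (ZMod m) x :=
  RingHom.congr_fun (castHom_comp hmk hkn) x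

theorem dvd_val_iff_castHom_eq_zero [NeZero n] (h : m ∣ n) (x : ZMod n) :
    m ∣ x.val ↔ castHom h (ZMod m) x = 0 := by
  rw [castHom_apply, ← natCast_val, natCast_eq_zero_iff]

theorem dvd_val_castHom_iff {d k : ℕ} [NeZero n] [NeZero k] (hdk : d ∣ k) (hkn : k ∣ n)
    (x : ZMod n) : d ∣ (castHom hkn (ZMod k) x).val ↔ d ∣ x.val := by
  rw [dvd_val_iff_castHom_eq_zero hdk, dvd_val_iff_castHom_eq_zero (hdk.trans hkn),
    castHom_castHom]

theorem card_castHom_fiber [NeZero n] (h : m ∣ n) (c : ZMod m) :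
    Nat.card {x : ZMod n // castHom h (ZMod m) x = c} = n / m := by
  have hm : 0 < m := Nat.pos_of_dvd_of_pos h (NeZero.pos n)
  set f := (castHom h (ZMod m)).toAddMonoidHom
  have hf : Surjective f := castHom_surjective h
  have hker := f.ker.card_mul_index
  rw [AddSubgroup.index_ker, AddMonoidHom.range_eq_top.mpr hf, AddSubgroup.card_top,
    Nat.card_zmod, Nat.card_zmod] at hker
  exact (Nat.card_congr (AddMonoidHom.fiberEquivKerOfSurjective hf c)).trans
    (Nat.div_eq_of_eq_mul_left hm hker.symm).symm

theorem card_castHom_eq_and_dvd_val [NeZero n] (hm : m ∣ n) {d : ℕ} (hmd : m ∣ d) (hd : d ∣ n)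
    (c : ZMod m) :
    Nat.card {x : ZMod n // castHom hm (ZMod m) x = c ∧ d ∣ x.val} =
      if c = 0 then n / d else 0 := by
  have hiff (x : ZMod n) :
      (castHom hm (ZMod m) x = c ∧ d ∣ x.val) ↔ castHom hd (ZMod d) x = 0 ∧ c = 0 := by
    rw [dvd_val_iff_castHom_eq_zero hd, ← castHom_castHom hmd hd]
    constructor
    · rintro ⟨rfl, h⟩; exact ⟨h, by rw [h, map_zero]⟩
    · rintro ⟨h, rfl⟩; exact ⟨by rw [h, map_zero], h⟩
  simp only [hiff]
  split_ifs with hc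
  · simp only [hc, and_true, card_castHom_fiber]
  · simp [hc]

theorem card_lifts_not_dvd_val_and_dvd_val [NeZero n] (hm : m ∣ n) {d₁ d₂ : ℕ} (hmd₁ : m ∣ d₁)
    (hd₁ : d₁ ∣ n) (hmd₂ : m ∣ d₂) (hd₂ : d₂ ∣ n) (c₁ c₂ : ZMod m) :
    Nat.card {x : ZMod n × ZMod n // castHom hm (ZMod m) x.1 = c₁ ∧
        castHom hm (ZMod m) x.2 = c₂ ∧ ¬(d₁ ∣ x.1.val ∧ d₂ ∣ x.2.val)} =
      n / m * (n / m) - if c₁ = 0 ∧ c₂ = 0 then n / d₁ * (n / d₂) else 0 := by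
  have hlifts := Nat.card_subtype_prod (castHom hm (ZMod m) · = c₁) (castHom hm (ZMod m) · = c₂)
  have hdvd := Nat.card_subtype_prod (fun y => castHom hm (ZMod m) y = c₁ ∧ d₁ ∣ y.val)
    (fun y => castHom hm (ZMod m) y = c₂ ∧ d₂ ∣ y.val)
  rw [card_castHom_fiber, card_castHom_fiber] at hlifts
  rw [card_castHom_eq_and_dvd_val hm hmd₁ hd₁, card_castHom_eq_and_dvd_val hm hmd₂ hd₂,
    ite_zero_mul_ite_zero] at hdvd
  have hsplit := Nat.card_subtype_and_not
    (fun x : ZMod n × ZMod n => castHom hm (ZMod m) x.1 = c₁ ∧ castHom hm (ZMod m) x.2 = c₂)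
    (fun x => d₁ ∣ x.1.val ∧ d₂ ∣ x.2.val)
  rw [Nat.card_congr (Equiv.subtypeEquivRight fun _ => and_and_and_comm), hdvd, hlifts] at hsplit
  exact (Nat.card_congr (Equiv.subtypeEquivRight fun _ => and_assoc.symm)).trans hsplit

theorem bijective_castHom_pi {ι : Type*} [Fintype ι] (m : ι → ℕ)
    (hm : Pairwise (Nat.Coprime on m)) {n : ℕ} (hn : ∏ i, m i = n) (hdvd : ∀ i, m i ∣ n) :
    Bijective fun (x : ZMod n) i => castHom (hdvd i) (ZMod (m i)) x := by
  subst hn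
  convert (prodEquivPi m hm).bijective using 1
  ext x i
  rw [prodEquivPi_apply]

theorem castHom_eq_intCast_iff_forall_primeFactors {q n : ℕ} (hq : Squarefree q)
    (hqn : q ∣ n) (x : ZMod n) (a : ℤ) :
    castHom hqn (ZMod q) x = a ↔ ∀ p : q.primeFactors,
      castHom ((Nat.dvd_of_mem_primeFactors p.2).trans hqn) (ZMod p) x = a := by
  have hinj := (bijective_castHom_pi (fun p : q.primeFactors => (p : ℕ))
    (Nat.pairwise_coprime_primeFactors q) (by simpa using hq.prod_primeFactors_pow 1)
    fun p => Nat.dvd_of_mem_primeFactors p.2).injective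
  rw [← hinj.eq_iff, funext_iff]
  simp only [castHom_castHom, map_intCast]

end ZMod

theorem Nat.Prime.card_admissible_lifts {p : ℕ} (hp : p.Prime) (a b : ℤ) :
    Nat.card {y : ZMod (p ^ 4) × ZMod (p ^ 4) //
        ZMod.castHom (dvd_pow_self p four_ne_zero) (ZMod p) y.1 = a ∧
        ZMod.castHom (dvd_pow_self p four_ne_zero) (ZMod p) y.2 = b ∧
        ¬(p ^ 2 ∣ y.1.val ∧ p ^ 4 ∣ y.2.val)} =
      if (p : ℤ) ∣ a ∧ (p : ℤ) ∣ b then p ^ 6 - p ^ 2 else p ^ 6 := by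
  have : NeZero (p ^ 4) := ⟨pow_ne_zero 4 hp.ne_zero⟩
  rw [ZMod.card_lifts_not_dvd_val_and_dvd_val _ (dvd_pow_self p two_ne_zero)
    (pow_dvd_pow p (by norm_num)) (dvd_pow_self p four_ne_zero) dvd_rfl]
  simp only [ZMod.intCast_zmod_eq_zero_iff_dvd]
  have hdiv (k : ℕ) (hk : k ≤ 4) : p ^ 4 / p ^ k = p ^ (4 - k) := Nat.pow_div hk hp.pos
  have hdiv₁ : p ^ 4 / p = p ^ 3 := by simpa using hdiv 1
  rw [hdiv₁, hdiv 2 (by norm_num), hdiv 4 le_rfl]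
  split_ifs <;> norm_num [← pow_add]

/-- For a squarefree positive integer `q` and residues `a, b` mod `q`, the number of lifts
`(a', b')` mod `q⁴` of `(a, b)` such that there is no prime `p ∣ q` with `p² ∣ a'` and
`p⁴ ∣ b'` equals `∏_{p ∣ q, p ∤ a or p ∤ b} p⁶ · ∏_{p ∣ q, p ∣ a and p ∣ b} (p⁶ - p²)`. -/
theorem count_admissible_lifts (q : ℕ) (hq : Squarefree q) (a b : ℤ) :
    Nat.card {x : ZMod (q ^ 4) × ZMod (q ^ 4) //
        (ZMod.castHom (dvd_pow_self q (by norm_num : (4 : ℕ) ≠ 0)) (ZMod q) x.1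
            = (a : ZMod q)) ∧
        (ZMod.castHom (dvd_pow_self q (by norm_num : (4 : ℕ) ≠ 0)) (ZMod q) x.2
            = (b : ZMod q)) ∧
        ∀ p ∈ q.primeFactors, ¬ (p ^ 2 ∣ x.1.val ∧ p ^ 4 ∣ x.2.val)} =
      ∏ p ∈ q.primeFactors,
        (if (p : ℤ) ∣ a ∧ (p : ℤ) ∣ b then p ^ 6 - p ^ 2 else p ^ 6) := by
  have : NeZero q := ⟨hq.ne_zero⟩
  have (p : q.primeFactors) : NeZero ((p : ℕ) ^ 4) :=
    ⟨pow_ne_zero 4 (Nat.prime_of_mem_primeFactors p.2).ne_zero⟩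
  have hdvd (p : q.primeFactors) : (p : ℕ) ^ 4 ∣ q ^ 4 :=
    pow_dvd_pow_of_dvd (Nat.dvd_of_mem_primeFactors p.2) 4
  let e := Equiv.ofBijective _ <| ZMod.bijective_castHom_pi _
    (fun p p' h => (Nat.pairwise_coprime_primeFactors q h).pow 4 4)
    (hq.prod_primeFactors_pow 4) hdvd
  rw [← Finset.prod_coe_sort, ← Fintype.prod_congr _ _ fun p : q.primeFactors =>
    (Nat.prime_of_mem_primeFactors p.2).card_admissible_lifts a b]
  refine Nat.card_subtype_prod_eq_prod_of_equiv_pi e _ fun x => ?_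
  simp only [e, Equiv.ofBijective_apply, ZMod.castHom_eq_intCast_iff_forall_primeFactors hq,
    ZMod.castHom_castHom, ZMod.dvd_val_castHom_iff (pow_dvd_pow _ (by norm_num : 2 ≤ 4)),
    ZMod.dvd_val_castHom_iff dvd_rfl, forall_and, Subtype.forall]
end
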